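/- arXiv:alg-geom/9712022 — 4 statements merged into one kernel-verified Lean document; each statement's English description precedes it below -/
import Mathlib

section
/- Let v₁ = (r₁, d₁) and v₂ = (r₂, d₂) be vectors in ℤ² with gcd(rᵢ, dᵢ) = 1 for i = 1,2 and det(v₁, v₂) = r₁d₂ - d₁r₂ ≠ 0. Set n = det(v₁, v₂). Then there exists a unique unit α ∈ (ZMod |n|)ˣ such that v₁ ≡ α·v₂ mod n·ℤ², i.e. r₁ ≡ α r₂ and d₁ ≡ α d₂ modulo n. -/
/-!
Modulo `n`, the determinant condition says `r₁ d₂ = d₁ r₂`. Since `v₂` is primitive there are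
`u, v` with `u r₂ + v d₂ = 1`, and `α = u r₁ + v d₁` then satisfies `v₁ = α v₂`; it is the only
such scalar because `(r₂, d₂)` generates the unit ideal. By symmetry `v₂ = β v₁`, and uniqueness
forces `α β = 1`.
-/

namespace IsCoprime

variable {R : Type*} [CommRing R] {r₁ d₁ r₂ d₂ : R}

theorem eq_of_mul_eq_mul (h : IsCoprime r₂ d₂) {a b : R}
    (hr : a * r₂ = b * r₂) (hd : a * d₂ = b * d₂) : a = b := by
  obtain ⟨u, v, huv⟩ := h
  calc a = (u * r₂ + v * d₂) * a := by rw [huv, one_mul]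
    _ = (u * r₂ + v * d₂) * b := by linear_combination u * hr + v * hd
    _ = b := by rw [huv, one_mul]

theorem exists_eq_mul_of_mul_eq_mul (h : IsCoprime r₂ d₂) (hdet : r₁ * d₂ = d₁ * r₂) :
    ∃ a, r₁ = a * r₂ ∧ d₁ = a * d₂ := by
  obtain ⟨u, v, huv⟩ := h
  exact ⟨u * r₁ + v * d₁,
    by linear_combination (-r₁) * huv + v * hdet,
    by linear_combination (-d₁) * huv - u * hdet⟩

theorem existsUnique_unit_of_mul_eq_mul (h₁ : IsCoprime r₁ d₁) (h₂ : IsCoprime r₂ d₂)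
    (hdet : r₁ * d₂ = d₁ * r₂) :
    ∃! α : Rˣ, r₁ = α * r₂ ∧ d₁ = α * d₂ := by
  obtain ⟨a, har, had⟩ := h₂.exists_eq_mul_of_mul_eq_mul hdet
  obtain ⟨b, hbr, hbd⟩ := h₁.exists_eq_mul_of_mul_eq_mul (r₁ := r₂) (d₁ := d₂)
    (by linear_combination -hdet)
  have hab : a * b = 1 :=
    h₂.eq_of_mul_eq_mul (by rw [mul_comm a, mul_assoc, ← har, ← hbr, one_mul])
      (by rw [mul_comm a, mul_assoc, ← had, ← hbd, one_mul])
  refine ⟨⟨a, b, hab, by rw [mul_comm, hab]⟩, ⟨har, had⟩, ?_⟩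
  rintro β ⟨hβr, hβd⟩
  exact Units.ext (h₂.eq_of_mul_eq_mul (hβr ▸ har) (hβd ▸ had))

end IsCoprime

theorem exists_unique_alpha_general (r₁ d₁ r₂ d₂ : ℤ)
    (h₁ : Int.gcd r₁ d₁ = 1) (h₂ : Int.gcd r₂ d₂ = 1)
    (n : ℤ) (hn : n = r₁ * d₂ - d₁ * r₂) :
    ∃! α : (ZMod n.natAbs)ˣ,
      (r₁ : ZMod n.natAbs) = (α : ZMod n.natAbs) * r₂ ∧
      (d₁ : ZMod n.natAbs) = (α : ZMod n.natAbs) * d₂ := by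
  have hcop {r d : ℤ} (h : Int.gcd r d = 1) : IsCoprime (r : ZMod n.natAbs) d :=
    (Int.isCoprime_iff_gcd_eq_one.mpr h).map (Int.castRingHom (ZMod n.natAbs))
  have hdet_zero : ((r₁ * d₂ - d₁ * r₂ : ℤ) : ZMod n.natAbs) = 0 :=
    (ZMod.intCast_zmod_eq_zero_iff_dvd _ _).mpr (by rw [← hn]; exact Int.natAbs_dvd_self)
  have hdet : (r₁ : ZMod n.natAbs) * d₂ = d₁ * r₂ := by
    push_cast at hdet_zero
    linear_combination hdet_zero
  exact (hcop h₁).existsUnique_unit_of_mul_eq_mul (hcop h₂) hdet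

theorem exists_unique_alpha (r₁ d₁ r₂ d₂ : ℤ)
    (h₁ : Int.gcd r₁ d₁ = 1) (h₂ : Int.gcd r₂ d₂ = 1)
    (n : ℤ) (hn : n = r₁ * d₂ - d₁ * r₂) (hn0 : n ≠ 0) :
    ∃! α : (ZMod n.natAbs)ˣ,
      (r₁ : ZMod n.natAbs) = (α : ZMod n.natAbs) * r₂ ∧
      (d₁ : ZMod n.natAbs) = (α : ZMod n.natAbs) * d₂ :=
  exists_unique_alpha_general r₁ d₁ r₂ d₂ h₁ h₂ n hn
end

section
/- Let v₁, v₂ be primitive vectors in ℤ² with n = det(v₁, v₂) ≠ 0, and let α(v₁,v₂) ∈ (ZMod |n|)ˣ be the unique unit with v₁ ≡ α v₂ mod n. Then for any A ∈ SL₂(ℤ), det(Av₁, Av₂) = det(v₁, v₂) and α(Av₁, Av₂) = α(v₁, v₂). -/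
open Matrix

theorem Matrix.mulVec_cross_fin_two {R : Type*} [CommRing R] (A : Matrix (Fin 2) (Fin 2) R)
    (v w : Fin 2 → R) :
    (A *ᵥ v) 0 * (A *ᵥ w) 1 - (A *ᵥ v) 1 * (A *ᵥ w) 0 = A.det * (v 0 * w 1 - v 1 * w 0) := by
  simp only [mulVec, dotProduct, Fin.sum_univ_two, det_fin_two]
  ring

theorem RingHom.comp_mulVec_eq_smul_of_comp_eq_smul {m n R S : Type*} [Fintype n] [CommRing R]
    [CommRing S] (f : R →+* S) (M : Matrix m n R) {v w : n → R} {c : S}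
    (h : f ∘ v = c • (f ∘ w)) : f ∘ (M *ᵥ v) = c • (f ∘ (M *ᵥ w)) := by
  funext i
  simp only [Function.comp_apply, Pi.smul_apply, RingHom.map_mulVec, h, mulVec_smul]

theorem det_alpha_SL2_invariant_general (v₁ v₂ : Fin 2 → ℤ)
    (n : ℤ) (hn : n = v₁ 0 * v₂ 1 - v₁ 1 * v₂ 0)
    (A : Matrix.SpecialLinearGroup (Fin 2) ℤ) :
    ((A : Matrix (Fin 2) (Fin 2) ℤ).mulVec v₁ 0 * (A : Matrix (Fin 2) (Fin 2) ℤ).mulVec v₂ 1 -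
      (A : Matrix (Fin 2) (Fin 2) ℤ).mulVec v₁ 1 * (A : Matrix (Fin 2) (Fin 2) ℤ).mulVec v₂ 0 = n) ∧
    ∀ α : (ZMod n.natAbs)ˣ,
      ((v₁ 0 : ZMod n.natAbs) = (α : ZMod n.natAbs) * v₂ 0 ∧
       (v₁ 1 : ZMod n.natAbs) = (α : ZMod n.natAbs) * v₂ 1) →
      (((A : Matrix (Fin 2) (Fin 2) ℤ).mulVec v₁ 0 : ZMod n.natAbs) =
          (α : ZMod n.natAbs) * ((A : Matrix (Fin 2) (Fin 2) ℤ).mulVec v₂ 0) ∧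
       ((A : Matrix (Fin 2) (Fin 2) ℤ).mulVec v₁ 1 : ZMod n.natAbs) =
          (α : ZMod n.natAbs) * ((A : Matrix (Fin 2) (Fin 2) ℤ).mulVec v₂ 1)) := by
  refine ⟨by rw [mulVec_cross_fin_two, A.det_coe, one_mul, hn], ?_⟩
  rintro α ⟨h0, h1⟩
  let f := Int.castRingHom (ZMod n.natAbs)
  have hv : f ∘ v₁ = (α : ZMod n.natAbs) • (f ∘ v₂) := by
    funext i
    fin_cases i
    · simpa using h0
    · simpa using h1
  have hAv := f.comp_mulVec_eq_smul_of_comp_eq_smul (A : Matrix (Fin 2) (Fin 2) ℤ) hv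
  exact ⟨by simpa using congrFun hAv 0, by simpa using congrFun hAv 1⟩

theorem det_alpha_SL2_invariant (v₁ v₂ : Fin 2 → ℤ)
    (h₁ : Int.gcd (v₁ 0) (v₁ 1) = 1) (h₂ : Int.gcd (v₂ 0) (v₂ 1) = 1)
    (n : ℤ) (hn : n = v₁ 0 * v₂ 1 - v₁ 1 * v₂ 0) (hn0 : n ≠ 0)
    (A : Matrix.SpecialLinearGroup (Fin 2) ℤ) :
    ((A : Matrix (Fin 2) (Fin 2) ℤ).mulVec v₁ 0 * (A : Matrix (Fin 2) (Fin 2) ℤ).mulVec v₂ 1 -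
      (A : Matrix (Fin 2) (Fin 2) ℤ).mulVec v₁ 1 * (A : Matrix (Fin 2) (Fin 2) ℤ).mulVec v₂ 0 = n) ∧
    ∀ α : (ZMod n.natAbs)ˣ,
      ((v₁ 0 : ZMod n.natAbs) = (α : ZMod n.natAbs) * v₂ 0 ∧
       (v₁ 1 : ZMod n.natAbs) = (α : ZMod n.natAbs) * v₂ 1) →
      (((A : Matrix (Fin 2) (Fin 2) ℤ).mulVec v₁ 0 : ZMod n.natAbs) =
          (α : ZMod n.natAbs) * ((A : Matrix (Fin 2) (Fin 2) ℤ).mulVec v₂ 0) ∧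
       ((A : Matrix (Fin 2) (Fin 2) ℤ).mulVec v₁ 1 : ZMod n.natAbs) =
          (α : ZMod n.natAbs) * ((A : Matrix (Fin 2) (Fin 2) ℤ).mulVec v₂ 1)) :=
  det_alpha_SL2_invariant_general v₁ v₂ n hn A
end

section
/- Let v₁, v₂ and w₁, w₂ be two pairs of primitive vectors in ℤ² with det(v₁,v₂) = det(w₁,w₂) = n ≠ 0 and α(v₁,v₂) = α(w₁,w₂). Then there exists A ∈ SL₂(ℤ) with A v₁ = w₁ and A v₂ = w₂. That is, the pair (det, α) is a complete invariant for the SL₂(ℤ)-action on pairs of primitive vectors with nonzero determinant. -/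
/-!
Let `V` and `W` be the matrices with columns `v₁, v₂` and `w₁, w₂`. The only candidate is
`A = W V⁻¹ = W · adj V / n`, which has determinant `1` and sends `V` to `W`; it is integral because
modulo `n` both `V` and `W` have first column `α` times the second, and then `W · adj V ≡ 0`.
-/

open Matrix

theorem Matrix.exists_specialLinearGroup_mul_eq_of_dvd_mul_adjugate {ι R : Type*}
    [Fintype ι] [DecidableEq ι] [CommRing R] [IsDomain R] {V W : Matrix ι ι R}
    (hV : V.det ≠ 0) (hdet : W.det = V.det) (hdvd : ∀ i j, V.det ∣ (W * V.adjugate) i j) :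
    ∃ A : SpecialLinearGroup ι R, (A : Matrix ι ι R) * V = W := by
  choose B hB using hdvd
  have hWB : W * V.adjugate = V.det • Matrix.of B := by ext i j; exact hB i j
  have hBV : Matrix.of B * V = W := by
    refine smul_right_injective _ hV ?_
    calc V.det • (Matrix.of B * V) = W * V.adjugate * V := by rw [hWB, smul_mul]
      _ = V.det • W := by rw [Matrix.mul_assoc, adjugate_mul, Matrix.mul_smul, Matrix.mul_one]
  have hBdet : (Matrix.of B).det = 1 := by
    have := congrArg det hBV
    rw [det_mul, hdet] at this
    exact (mul_eq_right₀ hV).mp this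
  exact ⟨⟨Matrix.of B, hBdet⟩, hBV⟩

theorem Matrix.mul_adjugate_eq_zero_of_col_eq_smul {S : Type*} [CommRing S]
    {v w : Fin 2 → Fin 2 → S} (a : S) (hv : v 0 = a • v 1) (hw : w 0 = a • w 1) :
    (of w)ᵀ * ((of v)ᵀ).adjugate = 0 := by
  ext i j
  fin_cases j <;> simp [adjugate_fin_two, mul_apply, Fin.sum_univ_two, hv, hw] <;> ring

theorem Matrix.mul_transpose_of_eq_iff {ι R : Type*} [Fintype ι] [CommRing R]
    (A : Matrix ι ι R) (v w : ι → ι → R) :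
    A * (of v)ᵀ = (of w)ᵀ ↔ ∀ j, A *ᵥ v j = w j := by
  simp only [← Matrix.ext_iff, funext_iff]
  exact forall_comm

theorem det_alpha_complete_invariant_general (v₁ v₂ w₁ w₂ : Fin 2 → ℤ)
    (n : ℤ) (hn0 : n ≠ 0)
    (hdv : v₁ 0 * v₂ 1 - v₁ 1 * v₂ 0 = n)
    (hdw : w₁ 0 * w₂ 1 - w₁ 1 * w₂ 0 = n)
    (α : (ZMod n.natAbs)ˣ)
    (hαv : (v₁ 0 : ZMod n.natAbs) = (α : ZMod n.natAbs) * v₂ 0 ∧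
           (v₁ 1 : ZMod n.natAbs) = (α : ZMod n.natAbs) * v₂ 1)
    (hαw : (w₁ 0 : ZMod n.natAbs) = (α : ZMod n.natAbs) * w₂ 0 ∧
           (w₁ 1 : ZMod n.natAbs) = (α : ZMod n.natAbs) * w₂ 1) :
    ∃ A : Matrix.SpecialLinearGroup (Fin 2) ℤ,
      (A : Matrix (Fin 2) (Fin 2) ℤ).mulVec v₁ = w₁ ∧
      (A : Matrix (Fin 2) (Fin 2) ℤ).mulVec v₂ = w₂ := by
  set V := (of ![v₁, v₂])ᵀ
  set W := (of ![w₁, w₂])ᵀ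
  have hV : V.det = n := by simpa [V, det_fin_two] using hdv
  have hW : W.det = n := by simpa [W, det_fin_two] using hdw
  have hmod : (Int.castRingHom (ZMod n.natAbs)).mapMatrix (W * V.adjugate) = 0 := by
    rw [map_mul, RingHom.map_adjugate]
    refine mul_adjugate_eq_zero_of_col_eq_smul (α : ZMod n.natAbs) ?_ ?_ <;>
      funext i <;> fin_cases i
    exacts [hαv.1, hαv.2, hαw.1, hαw.2]
  have hdvd : ∀ i j, V.det ∣ (W * V.adjugate) i j := fun i j => by
    rw [hV, ← Int.natAbs_dvd, ← ZMod.intCast_zmod_eq_zero_iff_dvd]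
    exact congrFun (congrFun hmod i) j
  obtain ⟨A, hA⟩ := exists_specialLinearGroup_mul_eq_of_dvd_mul_adjugate (hV ▸ hn0)
    (hW.trans hV.symm) hdvd
  have hcols := (mul_transpose_of_eq_iff _ _ _).mp hA
  exact ⟨A, hcols 0, hcols 1⟩

theorem det_alpha_complete_invariant (v₁ v₂ w₁ w₂ : Fin 2 → ℤ)
    (hv₁ : Int.gcd (v₁ 0) (v₁ 1) = 1) (hv₂ : Int.gcd (v₂ 0) (v₂ 1) = 1)
    (hw₁ : Int.gcd (w₁ 0) (w₁ 1) = 1) (hw₂ : Int.gcd (w₂ 0) (w₂ 1) = 1)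
    (n : ℤ) (hn0 : n ≠ 0)
    (hdv : v₁ 0 * v₂ 1 - v₁ 1 * v₂ 0 = n)
    (hdw : w₁ 0 * w₂ 1 - w₁ 1 * w₂ 0 = n)
    (α : (ZMod n.natAbs)ˣ)
    (hαv : (v₁ 0 : ZMod n.natAbs) = (α : ZMod n.natAbs) * v₂ 0 ∧
           (v₁ 1 : ZMod n.natAbs) = (α : ZMod n.natAbs) * v₂ 1)
    (hαw : (w₁ 0 : ZMod n.natAbs) = (α : ZMod n.natAbs) * w₂ 0 ∧
           (w₁ 1 : ZMod n.natAbs) = (α : ZMod n.natAbs) * w₂ 1) :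
    ∃ A : Matrix.SpecialLinearGroup (Fin 2) ℤ,
      (A : Matrix (Fin 2) (Fin 2) ℤ).mulVec v₁ = w₁ ∧
      (A : Matrix (Fin 2) (Fin 2) ℤ).mulVec v₂ = w₂ :=
  det_alpha_complete_invariant_general v₁ v₂ w₁ w₂ n hn0 hdv hdw α hαv hαw
end

section
/- Let g be a Lie algebra acting on a vector space V, t = Σᵢ xᵢ⊗yᵢ ∈ g⊗g a symmetric invariant tensor with t_*(v⊗v) = Σᵢ(xᵢ·v)⊗(yᵢ·v) = 0 for all v ∈ V. Then for any φ₁, φ₂, φ₃ ∈ V* and v ∈ V, one has Σ_{i,j} φ₁([xᵢ,xⱼ]·v) φ₂(yᵢ·v) φ₃(yⱼ·v) = 0; i.e. ⟨d_v*φ₁, d_v*φ₂, d_v*φ₃⟩_t = 0 where d_v*φ(A) = φ(A·v). -/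
/-!
Write `B(f, g) = ∑ᵢ f (xᵢ v) g (yᵢ v)`; pairing `t_*(v ⊗ v) = 0` with `f ⊗ g` gives `B(f, g) = 0`
for all functionals `f, g`, and polarizing it moves an operator from the `x`-slot to the `y`-slot at the
cost of a sign. Expanding `[xᵢ, xⱼ] v = xᵢ xⱼ v - xⱼ xᵢ v`, the term with `xⱼ xᵢ v` vanishes because
for fixed `j` its inner sum is `B(φ₁ ∘ xⱼ, φ₂)`, and the term with `xᵢ xⱼ v` becomes, after moving `xⱼ`
across, a sum over `i` of `φ₁ (xᵢ v)` times `B(φ₂ ∘ yᵢ, φ₃)`.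
-/

open TensorProduct

section

variable {R M N ι : Type*} [CommRing R] [AddCommGroup M] [Module R M] [AddCommGroup N] [Module R N]
  [Fintype ι]

theorem sum_mul_eq_zero_of_sum_tmul_eq_zero (f : M →ₗ[R] R) (g : N →ₗ[R] R) {m : ι → M}
    {n : ι → N} (h : ∑ i, m i ⊗ₜ[R] n i = 0) : ∑ i, f (m i) * g (n i) = 0 := by
  simpa using congrArg (lift ((LinearMap.mul R R).compl₁₂ f g)) h

theorem sum_tmul_apply_eq_neg_of_forall_sum_tmul_apply_self_eq_zero {a b : ι → M →ₗ[R] N}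
    (h : ∀ v, ∑ i, a i v ⊗ₜ[R] b i v = 0) (v w : M) :
    ∑ i, a i w ⊗ₜ[R] b i v = -∑ i, a i v ⊗ₜ[R] b i w := by
  have hvw := h (v + w)
  simp only [map_add, tmul_add, add_tmul, Finset.sum_add_distrib, h v, h w, zero_add,
    add_zero] at hvw
  exact eq_neg_of_add_eq_zero_left hvw

end

section

variable {R M ι : Type*} [CommRing R] [AddCommGroup M] [Module R M] [Fintype ι]
  {a b : ι → Module.End R M} (h : ∀ v, ∑ i, a i v ⊗ₜ[R] b i v = 0)
include h

theorem sum_sum_apply_apply_swap_mul_mul_eq_zero (φ₁ φ₂ φ₃ : M →ₗ[R] R) (v : M) :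
    ∑ i, ∑ j, φ₁ (a j (a i v)) * φ₂ (b i v) * φ₃ (b j v) = 0 := by
  rw [Finset.sum_comm]
  refine Finset.sum_eq_zero fun j _ => ?_
  rw [← Finset.sum_mul]
  exact mul_eq_zero_of_left (sum_mul_eq_zero_of_sum_tmul_eq_zero (φ₁ ∘ₗ a j) φ₂ (h v)) _

theorem sum_sum_apply_apply_mul_mul_eq_zero (φ₁ φ₂ φ₃ : M →ₗ[R] R) (v : M) :
    ∑ i, ∑ j, φ₁ (a i (a j v)) * φ₂ (b i v) * φ₃ (b j v) = 0 := by
  have hmove : ∀ j, ∑ i, φ₁ (a i (a j v)) * φ₂ (b i v) = -∑ i, φ₁ (a i v) * φ₂ (b i (a j v)) := by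
    intro j
    have := congrArg (lift ((LinearMap.mul R R).compl₁₂ φ₁ φ₂))
      (sum_tmul_apply_eq_neg_of_forall_sum_tmul_apply_self_eq_zero h v (a j v))
    simpa using this
  calc ∑ i, ∑ j, φ₁ (a i (a j v)) * φ₂ (b i v) * φ₃ (b j v)
      = ∑ j, (∑ i, φ₁ (a i (a j v)) * φ₂ (b i v)) * φ₃ (b j v) := by
        rw [Finset.sum_comm]; simp only [Finset.sum_mul]
    _ = -∑ i, φ₁ (a i v) * ∑ j, φ₂ (b i (a j v)) * φ₃ (b j v) := by
        simp only [hmove, neg_mul, Finset.sum_neg_distrib, Finset.sum_mul, Finset.mul_sum, mul_assoc]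
        rw [Finset.sum_comm]
    _ = 0 := by
        refine neg_eq_zero.mpr (Finset.sum_eq_zero fun i _ => ?_)
        exact mul_eq_zero_of_right _ (sum_mul_eq_zero_of_sum_tmul_eq_zero (φ₂ ∘ₗ b i) φ₃ (h v))

end

theorem triple_bracket_vanishes_on_dv_general
    (k : Type*) [Field k]
    (g : Type*) [LieRing g] [LieAlgebra k g]
    (V : Type*) [AddCommGroup V] [Module k V] [LieRingModule g V] [LieModule k g V]
    (ι : Type*) [Fintype ι] (x y : ι → g)
    (ht : ∀ v : V, (∑ i, (⁅x i, v⁆ ⊗ₜ[k] ⁅y i, v⁆)) = (0 : V ⊗[k] V)) :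
    ∀ (φ₁ φ₂ φ₃ : V →ₗ[k] k) (v : V),
      (∑ i, ∑ j, φ₁ ⁅⁅x i, x j⁆, v⁆ * φ₂ ⁅y i, v⁆ * φ₃ ⁅y j, v⁆) = 0 := by
  intro φ₁ φ₂ φ₃ v
  have ht' : ∀ v, ∑ i, LieModule.toEnd k g V (x i) v ⊗ₜ[k] LieModule.toEnd k g V (y i) v = 0 := ht
  simp only [lie_lie, map_sub, sub_mul, Finset.sum_sub_distrib]
  exact sub_eq_zero.mpr <| (sum_sum_apply_apply_mul_mul_eq_zero ht' φ₁ φ₂ φ₃ v).trans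
    (sum_sum_apply_apply_swap_mul_mul_eq_zero ht' φ₁ φ₂ φ₃ v).symm

theorem triple_bracket_vanishes_on_dv
    (k : Type*) [Field k]
    (g : Type*) [LieRing g] [LieAlgebra k g]
    (V : Type*) [AddCommGroup V] [Module k V] [LieRingModule g V] [LieModule k g V]
    (ι : Type*) [Fintype ι] (x y : ι → g)
    (hsym : (∑ i, x i ⊗ₜ[k] y i) = ∑ i, y i ⊗ₜ[k] x i)
    (hinv : ∀ a : g, (∑ i, (⁅a, x i⁆ ⊗ₜ[k] y i + x i ⊗ₜ[k] ⁅a, y i⁆)) = (0 : g ⊗[k] g))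
    (ht : ∀ v : V, (∑ i, (⁅x i, v⁆ ⊗ₜ[k] ⁅y i, v⁆)) = (0 : V ⊗[k] V)) :
    ∀ (φ₁ φ₂ φ₃ : V →ₗ[k] k) (v : V),
      (∑ i, ∑ j, φ₁ ⁅⁅x i, x j⁆, v⁆ * φ₂ ⁅y i, v⁆ * φ₃ ⁅y j, v⁆) = 0 :=
  triple_bracket_vanishes_on_dv_general k g V ι x y ht
end
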